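/- arXiv:cs/0508119 — 2 statements merged into one kernel-verified Lean document; each statement's English description precedes it below -/
import Mathlib

section
/- Let (Ȳ,Z̄,V) be random variables over finite alphabets with joint pmf p'(ȳ,v)·∏_{m=1}^{M'} q'_m(z_m|y_m). Then for any nonempty set Î ⊆ {1,…,M'} and any two disjoint nonempty sets I, I' ⊆ Î: I(Ȳ_{I∪I'};Z̄_{I∪I'}|Z̄_{Î\(I∪I')},V) = I(Ȳ_I;Z̄_I|Z̄_{Î\(I∪I')},V) + I(Ȳ_{I'};Z̄_{I'}|Z̄_{Î\I'},V). -/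
open Finset
open scoped Classical

noncomputable section

/-- The distribution (pmf) of the random variable `X` under the pmf `P` on the finite
sample space `Ω`. -/
def dist {Ω α : Type*} [Fintype Ω] [Fintype α] (P : Ω → ℝ) (X : Ω → α) (a : α) : ℝ :=
  ∑ ω, if X ω = a then P ω else 0

/-- Shannon entropy (base 2) of the random variable `X` under the pmf `P`. -/
def Hent {Ω α : Type*} [Fintype Ω] [Fintype α] (P : Ω → ℝ) (X : Ω → α) : ℝ :=
  -∑ a, dist P X a * Real.logb 2 (dist P X a)

/-- Conditional entropy `H(X | Y)`. -/
def condEnt {Ω α β : Type*} [Fintype Ω] [Fintype α] [Fintype β]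
    (P : Ω → ℝ) (X : Ω → α) (Y : Ω → β) : ℝ :=
  Hent P (fun ω => (X ω, Y ω)) - Hent P Y

/-- Conditional mutual information `I(X ; Y | Z)`. -/
def condMI {Ω α β γ : Type*} [Fintype Ω] [Fintype α] [Fintype β] [Fintype γ]
    (P : Ω → ℝ) (X : Ω → α) (Y : Ω → β) (Z : Ω → γ) : ℝ :=
  Hent P (fun ω => (X ω, Z ω)) + Hent P (fun ω => (Y ω, Z ω))
    - Hent P (fun ω => (X ω, Y ω, Z ω)) - Hent P Z

/-- The ε-strongly typical set condition for a sequence `xs` with respect to pmf `p`: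
`|N(a|xs)/n − p(a)| < ε/|α|` for every letter `a`. -/
def StronglyTypical {α : Type*} [Fintype α] (p : α → ℝ) {n : ℕ} (xs : Fin n → α)
    (ε : ℝ) : Prop :=
  ∀ a : α, |((Finset.univ.filter fun k => xs k = a).card : ℝ) / n - p a|
    < ε / Fintype.card α

section YZV

variable {M' : ℕ}

/-- Canonical sample space for `(Ȳ, Z̄, V)`. -/
abbrev Samp (𝒴 𝒵 : Fin M' → Type*) (V : Type*) : Type _ :=
  (∀ i, 𝒴 i) × (∀ i, 𝒵 i) × V

variable {𝒴 𝒵 : Fin M' → Type*} [∀ i, Fintype (𝒴 i)] [∀ i, Fintype (𝒵 i)]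
  {V : Type*} [Fintype V]

/-- The joint pmf `p'(ȳ,v) · ∏ₘ q'ₘ(zₘ | yₘ)` on the canonical sample space: conditionally
on `(Ȳ,V)` the `Zₘ` are mutually independent and `Zₘ` depends only on `Yₘ`. -/
def Pjoint (p' : (∀ i, 𝒴 i) × V → ℝ) (q : ∀ m, 𝒴 m → 𝒵 m → ℝ) :
    Samp 𝒴 𝒵 V → ℝ :=
  fun ω => p' (ω.1, ω.2.2) * ∏ m, q m (ω.1 m) (ω.2.1 m)

/-- `Ȳ_I`. -/
def Ybar (I : Finset (Fin M')) : Samp 𝒴 𝒵 V → (∀ i : I, 𝒴 i.1) := fun ω i => ω.1 i.1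

/-- `Z̄_I`. -/
def Zbar (I : Finset (Fin M')) : Samp 𝒴 𝒵 V → (∀ i : I, 𝒵 i.1) := fun ω i => ω.2.1 i.1

/-- The pair `(Z̄_I, V)` used as a conditioning variable. -/
def ZbarV (I : Finset (Fin M')) : Samp 𝒴 𝒵 V → (∀ i : I, 𝒵 i.1) × V :=
  fun ω => (fun i => ω.2.1 i.1, ω.2.2)

/-- Membership in the region `B*`: `I(Ȳ_I; Z̄_I | Z̄_{Iᶜ}, V) ≤ Σ_{i∈I} R_i` for every
nonempty `I ⊆ {1,…,M'}`. -/
def memBstar (p' : (∀ i, 𝒴 i) × V → ℝ) (q : ∀ m, 𝒴 m → 𝒵 m → ℝ)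
    (R : Fin M' → ℝ) : Prop :=
  ∀ I : Finset (Fin M'), I.Nonempty →
    condMI (Pjoint p' q) (Ybar I) (Zbar I) (ZbarV Iᶜ) ≤ ∑ i ∈ I, R i

end YZV

/-! For disjoint `S, J`, conditionally on `(Ȳ_S, Z̄_J, V)` the vector `Z̄_S` has law
`∏_{m∈S} q_m(y_m, ·)`, so `H(Ȳ_S, Z̄_{S∪J}, V) = H(Ȳ_S, Z̄_J, V) − Σ_{m∈S} E log q_m(Y_m, Z_m)`
and therefore
`I(Ȳ_S; Z̄_S | Z̄_J, V) = H(Z̄_{S∪J}, V) − H(Z̄_J, V) + Σ_{m∈S} E log q_m(Y_m, Z_m)`.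
For the three pairs `(I ∪ I', Î∖(I∪I'))`, `(I, Î∖(I∪I'))` and `(I', Î∖I') = (I', I ∪ Î∖(I∪I'))`
the entropy terms telescope and the log-likelihood sums add up over `I ⊔ I'`. -/

section Entropy

variable {Ω α β : Type*} [Fintype Ω] [Fintype α] [Fintype β]

lemma sum_dist_mul (P : Ω → ℝ) (X : Ω → α) (f : α → ℝ) :
    ∑ a, _root_.dist P X a * f a = ∑ ω, P ω * f (X ω) := by
  simp only [_root_.dist, Finset.sum_mul, ite_mul, zero_mul]
  rw [Finset.sum_comm]
  simp

lemma Hent_eq_neg_sum_logb_dist (P : Ω → ℝ) (X : Ω → α) :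
    Hent P X = -∑ ω, P ω * Real.logb 2 (_root_.dist P X (X ω)) := by
  rw [Hent, sum_dist_mul]

lemma le_dist_self {P : Ω → ℝ} (hP : ∀ ω, 0 ≤ P ω) (X : Ω → α) (ω : Ω) :
    P ω ≤ _root_.dist P X (X ω) := by
  unfold _root_.dist
  simpa using Finset.single_le_sum (f := fun ω' => if X ω' = X ω then P ω' else 0)
    (fun ω' _ => by split_ifs <;> simp [hP]) (Finset.mem_univ ω)

lemma Hent_eq_of_forall_eq_iff (P : Ω → ℝ) {X : Ω → α} {Y : Ω → β}
    (h : ∀ ω ω', X ω' = X ω ↔ Y ω' = Y ω) : Hent P X = Hent P Y := by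
  simp only [Hent_eq_neg_sum_logb_dist, _root_.dist, h]

lemma Hent_eq_sub_of_dist_eq_mul {P : Ω → ℝ} (hP : ∀ ω, 0 ≤ P ω) {X : Ω → α} {Y : Ω → β}
    {g : Ω → ℝ} (h : ∀ ω, _root_.dist P X (X ω) = _root_.dist P Y (Y ω) * g ω) :
    Hent P X = Hent P Y - ∑ ω, P ω * Real.logb 2 (g ω) := by
  simp only [Hent_eq_neg_sum_logb_dist, sub_eq_add_neg, ← neg_add, ← Finset.sum_add_distrib,
    ← mul_add]
  congr 2
  funext ω
  rcases (hP ω).eq_or_lt with hω | hω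
  · simp [← hω]
  have hX := hω.trans_le (le_dist_self hP X ω)
  have hY := hω.trans_le (le_dist_self hP Y ω)
  rw [h] at hX ⊢
  rw [Real.logb_mul hY.ne' (right_ne_zero_of_mul hX.ne')]

end Entropy

lemma sum_ite_forall_mem_eq_prod {ι : Type*} [Fintype ι] {κ : ι → Type*}
    [∀ i, Fintype (κ i)] (f : ∀ i, κ i → ℝ) (T : Finset ι)
    (hf : ∀ i ∉ T, ∑ x, f i x = 1) (z₀ : ∀ i, κ i) :
    ∑ z : ∀ i, κ i, (if ∀ i ∈ T, z i = z₀ i then ∏ i, f i (z i) else 0)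
      = ∏ i ∈ T, f i (z₀ i) := by
  have hsum : ∀ i, ∑ x, (if i ∈ T → x = z₀ i then f i x else 0)
      = if i ∈ T then f i (z₀ i) else 1 := by
    intro i
    split_ifs with hi
    · simp [hi]
    · simp [hi, hf i hi]
  rw [← Fintype.prod_ite_mem]
  simp_rw [← hsum]
  rw [Fintype.prod_sum]
  simp_rw [Fintype.prod_ite_zero]

section ProductChannel

variable {M' : ℕ} {𝒴 𝒵 : Fin M' → Type*} {V : Type*} {p' : (∀ i, 𝒴 i) × V → ℝ}
  {q : ∀ m, 𝒴 m → 𝒵 m → ℝ}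

lemma Pjoint_nonneg (hp'0 : ∀ yv, 0 ≤ p' yv) (hq0 : ∀ m y z, 0 ≤ q m y z)
    (ω : Samp 𝒴 𝒵 V) : 0 ≤ Pjoint p' q ω :=
  mul_nonneg (hp'0 _) (Finset.prod_nonneg fun _ _ => hq0 _ _ _)

variable [∀ i, Fintype (𝒴 i)] [∀ i, Fintype (𝒵 i)] [Fintype V]

lemma dist_Ybar_ZbarV_self (hq1 : ∀ m y, ∑ z, q m y z = 1) (S T : Finset (Fin M'))
    (ω₀ : Samp 𝒴 𝒵 V) :
    _root_.dist (Pjoint p' q) (fun ω => (Ybar S ω, ZbarV T ω)) (Ybar S ω₀, ZbarV T ω₀)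
      = ∑ y, if ∀ i ∈ S, y i = ω₀.1 i then p' (y, ω₀.2.2) * ∏ m ∈ T, q m (y m) (ω₀.2.1 m)
        else 0 := by
  simp only [_root_.dist, Pjoint, Ybar, ZbarV, Fintype.sum_prod_type, Prod.mk.injEq, funext_iff,
    Subtype.forall]
  refine Finset.sum_congr rfl fun y _ => ?_
  by_cases hS : ∀ i ∈ S, y i = ω₀.1 i
  · simp only [ite_and, if_pos hS, Finset.sum_ite_irrel, Finset.sum_const_zero, Finset.sum_ite_eq',
      Finset.mem_univ, if_true]
    simp_rw [← mul_ite_zero, ← Finset.mul_sum]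
    congr 1
    convert sum_ite_forall_mem_eq_prod (fun m => q m (y m)) T (fun m _ => hq1 m (y m)) ω₀.2.1
  · simp [hS]

lemma Hent_Ybar_ZbarV_union (hp'0 : ∀ yv, 0 ≤ p' yv) (hq0 : ∀ m y z, 0 ≤ q m y z)
    (hq1 : ∀ m y, ∑ z, q m y z = 1) {S J : Finset (Fin M')} (hSJ : Disjoint S J) :
    Hent (Pjoint p' q) (fun ω => (Ybar S ω, ZbarV (S ∪ J) ω))
      = Hent (Pjoint p' q) (fun ω => (Ybar S ω, ZbarV J ω))
        - ∑ m ∈ S, ∑ ω, Pjoint p' q ω * Real.logb 2 (q m (ω.1 m) (ω.2.1 m)) := by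
  have hdist : ∀ ω,
      _root_.dist (Pjoint p' q) (fun ω => (Ybar S ω, ZbarV (S ∪ J) ω)) (Ybar S ω, ZbarV (S ∪ J) ω)
        = _root_.dist (Pjoint p' q) (fun ω => (Ybar S ω, ZbarV J ω)) (Ybar S ω, ZbarV J ω)
          * ∏ m ∈ S, q m (ω.1 m) (ω.2.1 m) := by
    intro ω
    rw [dist_Ybar_ZbarV_self hq1, dist_Ybar_ZbarV_self hq1, Finset.sum_mul]
    refine Finset.sum_congr rfl fun y _ => ?_
    -- on the event `Ȳ_S = y_S` the factors indexed by `S` no longer depend on `y`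
    split_ifs with hy
    · rw [Finset.prod_union hSJ, Finset.prod_congr rfl fun m hm => by rw [hy m hm]]
      ring
    · rw [zero_mul]
  rw [Hent_eq_sub_of_dist_eq_mul (Pjoint_nonneg hp'0 hq0) hdist, Finset.sum_comm]
  congr 1
  refine Finset.sum_congr rfl fun ω _ => ?_
  rcases eq_or_ne (Pjoint p' q ω) 0 with hω | hω
  · simp [hω]
  · rw [Real.logb_prod _ _ fun m _ hm => hω ?_, Finset.mul_sum]
    rw [Pjoint, Finset.prod_eq_zero (Finset.mem_univ m) hm, mul_zero]

lemma Hent_Zbar_ZbarV (P : Samp 𝒴 𝒵 V → ℝ) (S J : Finset (Fin M')) :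
    Hent P (fun ω => (Zbar S ω, ZbarV J ω)) = Hent P (ZbarV (S ∪ J)) :=
  Hent_eq_of_forall_eq_iff P fun ω ω' => by
    simp only [Zbar, ZbarV, Prod.mk.injEq, funext_iff, Subtype.forall, Finset.mem_union, or_imp,
      forall_and, and_assoc]

lemma Hent_Ybar_Zbar_ZbarV (P : Samp 𝒴 𝒵 V → ℝ) (S J : Finset (Fin M')) :
    Hent P (fun ω => (Ybar S ω, Zbar S ω, ZbarV J ω))
      = Hent P (fun ω => (Ybar S ω, ZbarV (S ∪ J) ω)) :=
  Hent_eq_of_forall_eq_iff P fun ω ω' => by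
    simp only [Ybar, Zbar, ZbarV, Prod.mk.injEq, funext_iff, Subtype.forall, Finset.mem_union,
      or_imp, forall_and, and_assoc]

lemma condMI_Ybar_Zbar_ZbarV (hp'0 : ∀ yv, 0 ≤ p' yv) (hq0 : ∀ m y z, 0 ≤ q m y z)
    (hq1 : ∀ m y, ∑ z, q m y z = 1) {S J : Finset (Fin M')} (hSJ : Disjoint S J) :
    condMI (Pjoint p' q) (Ybar S) (Zbar S) (ZbarV J)
      = Hent (Pjoint p' q) (ZbarV (S ∪ J)) - Hent (Pjoint p' q) (ZbarV J)
        + ∑ m ∈ S, ∑ ω, Pjoint p' q ω * Real.logb 2 (q m (ω.1 m) (ω.2.1 m)) := by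
  rw [condMI, Hent_Zbar_ZbarV, Hent_Ybar_Zbar_ZbarV, Hent_Ybar_ZbarV_union hp'0 hq0 hq1 hSJ]
  ring

end ProductChannel

theorem statement_5_general (M' : ℕ) (𝒴 𝒵 : Fin M' → Type) [∀ i, Fintype (𝒴 i)]
    [∀ i, Fintype (𝒵 i)] (V : Type) [Fintype V]
    (p' : (∀ i, 𝒴 i) × V → ℝ) (q : ∀ m, 𝒴 m → 𝒵 m → ℝ)
    (hp'0 : ∀ yv, 0 ≤ p' yv)
    (hq0 : ∀ m y z, 0 ≤ q m y z) (hq1 : ∀ m y, ∑ z, q m y z = 1)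
    (Ihat I I' : Finset (Fin M'))
    (hIsub : I ⊆ Ihat) (hI'sub : I' ⊆ Ihat)
    (hII' : Disjoint I I') :
    condMI (Pjoint p' q) (Ybar (I ∪ I')) (Zbar (I ∪ I')) (ZbarV (Ihat \ (I ∪ I')))
      = condMI (Pjoint p' q) (Ybar I) (Zbar I) (ZbarV (Ihat \ (I ∪ I')))
        + condMI (Pjoint p' q) (Ybar I') (Zbar I') (ZbarV (Ihat \ I')) := by
  set J := Ihat \ (I ∪ I')
  have hcomp : Ihat \ I' = I ∪ J := by
    ext m
    have : m ∈ I → m ∉ I' := fun h => Finset.disjoint_left.mp hII' h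
    have : m ∈ I → m ∈ Ihat := fun h => hIsub h
    simp only [J, Finset.mem_sdiff, Finset.mem_union]
    tauto
  have hUJ : (I ∪ I') ∪ J = Ihat := Finset.union_sdiff_of_subset (Finset.union_subset hIsub hI'sub)
  have hI'IJ : I' ∪ (I ∪ J) = Ihat := by rw [← hcomp, Finset.union_sdiff_of_subset hI'sub]
  have hJ : Disjoint (I ∪ I') J := Finset.disjoint_sdiff
  have hIJ' : Disjoint I' (I ∪ J) := hcomp ▸ Finset.disjoint_sdiff
  rw [hcomp, condMI_Ybar_Zbar_ZbarV hp'0 hq0 hq1 hJ,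
    condMI_Ybar_Zbar_ZbarV hp'0 hq0 hq1 (hJ.mono_left Finset.subset_union_left),
    condMI_Ybar_Zbar_ZbarV hp'0 hq0 hq1 hIJ', hUJ, hI'IJ, Finset.sum_union hII']
  ring

/-- Corollary B.3 (cor:chain1) of the paper: for nonempty `Î ⊆ {1,…,M'}` and disjoint
nonempty `I, I' ⊆ Î`,
`I(Ȳ_{I∪I'}; Z̄_{I∪I'} | Z̄_{Î\(I∪I')}, V)
  = I(Ȳ_I; Z̄_I | Z̄_{Î\(I∪I')}, V) + I(Ȳ_{I'}; Z̄_{I'} | Z̄_{Î\I'}, V)`. -/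
theorem statement_5 (M' : ℕ) (𝒴 𝒵 : Fin M' → Type) [∀ i, Fintype (𝒴 i)]
    [∀ i, Fintype (𝒵 i)] (V : Type) [Fintype V]
    (p' : (∀ i, 𝒴 i) × V → ℝ) (q : ∀ m, 𝒴 m → 𝒵 m → ℝ)
    (hp'0 : ∀ yv, 0 ≤ p' yv) (hp'1 : ∑ yv, p' yv = 1)
    (hq0 : ∀ m y z, 0 ≤ q m y z) (hq1 : ∀ m y, ∑ z, q m y z = 1)
    (Ihat I I' : Finset (Fin M')) (hIhat : Ihat.Nonempty)
    (hIsub : I ⊆ Ihat) (hI'sub : I' ⊆ Ihat)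
    (hI : I.Nonempty) (hI' : I'.Nonempty) (hII' : Disjoint I I') :
    condMI (Pjoint p' q) (Ybar (I ∪ I')) (Zbar (I ∪ I')) (ZbarV (Ihat \ (I ∪ I')))
      = condMI (Pjoint p' q) (Ybar I) (Zbar I) (ZbarV (Ihat \ (I ∪ I')))
        + condMI (Pjoint p' q) (Ybar I') (Zbar I') (ZbarV (Ihat \ I')) :=
  statement_5_general M' 𝒴 𝒵 V p' q hp'0 hq0 hq1 Ihat I I' hIsub hI'sub hII'
end
end

section
/- Let (Ȳ,Z̄,V) be random variables over finite alphabets with joint pmf p'(ȳ,v)·∏_{m=1}^{M'} q'_m(z_m|y_m). Then for any nonempty set I ⊆ {1,…,M'}, listed as I = {i(1),…,i(m)} (any fixed enumeration of its m elements): I(Ȳ_I;Z̄_I|Z̄_{I^c},V) = Σ_{j=1}^{m} I(Y_{i(j)};Z_{i(j)}|Z̄_{{1,…,M'}\{i(j),i(j+1),…,i(m)}},V). -/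
open Finset
open scoped Classical

noncomputable section

/-!
Put `Φ(S) = H(Ȳ_I | Z̄_S, V)`. Given `Y_k`, the output `Z_k` is drawn from the channel `q'_k`
independently of everything else, so for `k ∉ S` we have
`H(Z_k | Y_k, Z̄_S, V) = H(Z_k | Ȳ_I, Z̄_S, V)`, whence
`I(Y_k; Z_k | Z̄_S, V) = I(Ȳ_I; Z_k | Z̄_S, V) = Φ(S) − Φ(S ∪ {k})`.
Adding `i(1), …, i(m)` to `Iᶜ` one at a time, the sum telescopes to
`Φ(Iᶜ) − Φ({1,…,M'}) = I(Ȳ_I; Z̄_I | Z̄_{Iᶜ}, V)`.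
-/

section Entropy

variable {Ω Ω' α β γ : Type*} [Fintype Ω] [Fintype Ω'] [Fintype α] [Fintype β] [Fintype γ]

lemma dist_comp (P : Ω → ℝ) (X : Ω → α) (f : α → β) (b : β) :
    dist P (fun ω => f (X ω)) b = ∑ a with f a = b, dist P X a := by
  unfold _root_.dist
  rw [Finset.sum_comm]
  refine sum_congr rfl fun ω _ => ?_
  rw [sum_ite_eq]
  simp

lemma dist_comp_equiv (e : Ω' ≃ Ω) (P : Ω → ℝ) (X : Ω → α) (a : α) :
    dist (fun ω => P (e ω)) (fun ω => X (e ω)) a = dist P X a :=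
  e.sum_comp fun ω => if X ω = a then P ω else 0

lemma Hent_comp_equiv (e : Ω' ≃ Ω) (P : Ω → ℝ) (X : Ω → α) :
    Hent (fun ω => P (e ω)) (fun ω => X (e ω)) = Hent P X := by
  simp only [Hent, dist_comp_equiv]

lemma condEnt_comp_equiv (e : Ω' ≃ Ω) (P : Ω → ℝ) (X : Ω → α) (Y : Ω → β) :
    condEnt (fun ω => P (e ω)) (fun ω => X (e ω)) (fun ω => Y (e ω)) = condEnt P X Y := by
  unfold condEnt
  rw [Hent_comp_equiv e P Y, Hent_comp_equiv e P fun ω => (X ω, Y ω)]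

lemma Hent_comp_of_injective (P : Ω → ℝ) (X : Ω → α) {f : α → β} (hf : Function.Injective f) :
    Hent P (fun ω => f (X ω)) = Hent P X := by
  unfold Hent
  congr 1
  refine (Fintype.sum_of_injective f hf _ _ (fun b hb => ?_) fun a => ?_).symm
  · have hfiber : ∀ a, f a ≠ b := fun a hab => hb ⟨a, hab⟩
    simp [dist_comp, hfiber]
  · have hfiber : ({a' | f a' = f a} : Finset α) = {a} := by ext; simp [hf.eq_iff]
    rw [dist_comp P X f, hfiber, sum_singleton]

lemma Hent_congr_of_injective (P : Ω → ℝ) {X : Ω → α} {Y : Ω → β} {f : α → β}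
    (hf : Function.Injective f) (hY : ∀ ω, Y ω = f (X ω)) : Hent P Y = Hent P X := by
  rw [funext hY, Hent_comp_of_injective P X hf]

lemma condEnt_congr_right_of_injective (P : Ω → ℝ) (X : Ω → α) {Y : Ω → β} {Y' : Ω → γ}
    {f : β → γ} (hf : Function.Injective f) (hY' : ∀ ω, Y' ω = f (Y ω)) :
    condEnt P X Y' = condEnt P X Y := by
  unfold condEnt
  rw [Hent_congr_of_injective P hf hY',
    Hent_congr_of_injective P (X := fun ω => (X ω, Y ω)) (Function.injective_id.prodMap hf)
      fun ω => by rw [hY']; rfl]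

lemma condMI_eq_condEnt_sub_left (P : Ω → ℝ) (X : Ω → α) (Y : Ω → β) (Z : Ω → γ) :
    condMI P X Y Z = condEnt P X Z - condEnt P X (fun ω => (Y ω, Z ω)) := by
  unfold condMI condEnt
  ring

lemma condMI_eq_condEnt_sub_right (P : Ω → ℝ) (X : Ω → α) (Y : Ω → β) (Z : Ω → γ) :
    condMI P X Y Z = condEnt P Y Z - condEnt P Y (fun ω => (X ω, Z ω)) := by
  have hswap : Hent P (fun ω => (Y ω, X ω, Z ω)) = Hent P (fun ω => (X ω, Y ω, Z ω)) :=
    Hent_congr_of_injective P (f := fun p => (p.2.1, p.1, p.2.2))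
      (fun _ _ h => by simp_all [Prod.ext_iff]) fun ω => rfl
  unfold condMI condEnt
  rw [hswap]
  ring

lemma mul_logb_mul (a b : ℝ) :
    a * b * Real.logb 2 (a * b) = b * (a * Real.logb 2 a) + a * (b * Real.logb 2 b) := by
  rcases eq_or_ne a 0 with rfl | ha
  · simp
  rcases eq_or_ne b 0 with rfl | hb
  · simp
  rw [Real.logb_mul ha hb]
  ring

lemma condEnt_eq_of_dist_pair_eq_mul (P : Ω → ℝ) (Z : Ω → γ) (X : Ω → α) (g : α → β)
    (k : β → γ → ℝ) (hk : ∀ b, ∑ c, k b c = 1)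
    (hZX : ∀ c x, dist P (fun ω => (Z ω, X ω)) (c, x) = k (g x) c * dist P X x) :
    condEnt P Z X = ∑ b, dist P (fun ω => g (X ω)) b * -∑ c, k b c * Real.logb 2 (k b c) := by
  have hpair : Hent P (fun ω => (Z ω, X ω)) = Hent P X
      - ∑ x, dist P X x * ∑ c, k (g x) c * Real.logb 2 (k (g x) c) := by
    unfold Hent
    rw [Fintype.sum_prod_type, sum_comm]
    simp only [hZX, mul_logb_mul, sum_add_distrib, ← mul_sum, ← sum_mul, hk, one_mul]
    ring
  have hfib : ∀ x, dist P X x * ∑ c, k (g x) c * Real.logb 2 (k (g x) c)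
      = ∑ b, if g x = b then dist P X x * ∑ c, k b c * Real.logb 2 (k b c) else 0 := by
    intro x
    rw [sum_ite_eq]
    simp
  simp only [condEnt, hpair, dist_comp, sum_mul, mul_neg, sum_neg_distrib, sum_filter]
  rw [sum_congr rfl fun x _ => hfib x, sum_comm]
  simp only [ite_mul, zero_mul]
  ring

end Entropy

section Kernel

variable {A C α β : Type*} [Fintype A] [Fintype C] [Fintype α]

lemma dist_pair_snd_of_kernel (P : A × C → ℝ) (R : A → ℝ) (k : β → C → ℝ)
    (hk : ∀ b, ∑ c, k b c = 1) (X : A → α) (g : α → β)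
    (hP : ∀ a c, P (a, c) = R a * k (g (X a)) c) (c : C) (x : α) :
    dist P (fun ω => (ω.2, X ω.1)) (c, x) = k (g x) c * dist P (fun ω => X ω.1) x := by
  have hX : dist P (fun ω => X ω.1) x = ∑ a, if X a = x then R a else 0 := by
    unfold _root_.dist
    rw [Fintype.sum_prod_type]
    refine sum_congr rfl fun a _ => ?_
    split_ifs
    · simp only [hP, ← mul_sum, hk, mul_one]
    · simp
  unfold _root_.dist at hX ⊢
  rw [hX, Fintype.sum_prod_type, mul_sum]
  refine sum_congr rfl fun a _ => ?_
  rw [sum_eq_single c (fun c' _ hc' => by simp [hc']) (by simp)]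
  by_cases hXa : X a = x
  · subst hXa
    simp [hP, mul_comm]
  · simp [hXa]

lemma condEnt_snd_of_kernel [Fintype β] (P : A × C → ℝ) (R : A → ℝ) (k : β → C → ℝ)
    (hk : ∀ b, ∑ c, k b c = 1) (X : A → α) (g : α → β)
    (hP : ∀ a c, P (a, c) = R a * k (g (X a)) c) :
    condEnt P (fun ω => ω.2) (fun ω => X ω.1)
      = ∑ b, dist P (fun ω => g (X ω.1)) b * -∑ c, k b c * Real.logb 2 (k b c) :=
  condEnt_eq_of_dist_pair_eq_mul P _ _ g k hk (dist_pair_snd_of_kernel P R k hk X g hP)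

end Kernel

section SplitAt

variable {M' : ℕ} {𝒴 𝒵 : Fin M' → Type*} {V : Type*}

def sampSplitAt (j : Fin M') :
    ((∀ i, 𝒴 i) × (∀ i : {i // i ≠ j}, 𝒵 i) × V) × 𝒵 j ≃ Samp 𝒴 𝒵 V where
  toFun a := (a.1.1, (Equiv.piSplitAt j 𝒵).symm (a.2, a.1.2.1), a.1.2.2)
  invFun ω := ((ω.1, (Equiv.piSplitAt j 𝒵 ω.2.1).2, ω.2.2), (Equiv.piSplitAt j 𝒵 ω.2.1).1)
  left_inv a := by simp
  right_inv ω := by simp only [Prod.mk.eta, Equiv.symm_apply_apply]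

lemma Pjoint_sampSplitAt (p' : (∀ i, 𝒴 i) × V → ℝ) (q : ∀ m, 𝒴 m → 𝒵 m → ℝ) (j : Fin M')
    (a : (∀ i, 𝒴 i) × (∀ i : {i // i ≠ j}, 𝒵 i) × V) (c : 𝒵 j) :
    Pjoint p' q (sampSplitAt j (a, c))
      = p' (a.1, a.2.2) * (∏ i : {i // i ≠ j}, q i (a.1 i) (a.2.1 i)) * q j (a.1 j) c := by
  have hrest : ∀ i : {i // i ≠ j}, (Equiv.piSplitAt j 𝒵).symm (c, a.2.1) i = a.2.1 i :=
    fun i => by simp [i.2]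
  change p' (a.1, a.2.2) * ∏ m, q m (a.1 m) ((Equiv.piSplitAt j 𝒵).symm (c, a.2.1) m) = _
  rw [Fintype.prod_eq_mul_prod_subtype_ne _ j]
  simp only [hrest, Equiv.piSplitAt_symm_apply, dite_true]
  ring

end SplitAt

section Pjoint

variable {M' : ℕ} {𝒴 𝒵 : Fin M' → Type*} [∀ i, Fintype (𝒴 i)] [∀ i, Fintype (𝒵 i)]
  {V : Type*} [Fintype V] (p' : (∀ i, 𝒴 i) × V → ℝ) (q : ∀ m, 𝒴 m → 𝒵 m → ℝ)

lemma condEnt_Z_eq_of_determines_Y (hq1 : ∀ m y, ∑ z, q m y z = 1) (k : Fin M')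
    {S : Finset (Fin M')} (hkS : k ∉ S) {α : Type*} [Fintype α] (W : (∀ i, 𝒴 i) → α)
    (g : α → 𝒴 k) (hg : ∀ y, g (W y) = y k) :
    condEnt (Pjoint p' q) (fun ω => ω.2.1 k) (fun ω => (W ω.1, ZbarV S ω))
      = ∑ y, dist (Pjoint p' q) (fun ω => ω.1 k) y * -∑ z, q k y z * Real.logb 2 (q k y z) := by
  set e := sampSplitAt (𝒴 := 𝒴) (𝒵 := 𝒵) (V := V) k
  let X₀ : (∀ i, 𝒴 i) × (∀ i : {i // i ≠ k}, 𝒵 i) × V → α × (∀ i : S, 𝒵 i) × V :=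
    fun a => (W a.1, fun i => a.2.1 ⟨i, fun h => hkS (h ▸ i.2)⟩, a.2.2)
  have hZ : ∀ ω, (e ω).2.1 k = ω.2 := fun ω => by simp [e, sampSplitAt]
  have hX : ∀ ω, (W (e ω).1, ZbarV S (e ω)) = X₀ ω.1 := fun ω => by
    simp only [e, sampSplitAt, ZbarV, X₀, Equiv.coe_fn_mk, Equiv.piSplitAt_symm_apply]
    refine Prod.ext rfl (Prod.ext (funext fun i => ?_) rfl)
    exact dif_neg fun h : (i : Fin M') = k => hkS (h ▸ i.2)
  calc _ = condEnt (fun ω => Pjoint p' q (e ω)) (fun ω => ω.2) (fun ω => X₀ ω.1) := by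
          rw [← condEnt_comp_equiv e]
          simp only [hZ, hX]
    _ = ∑ y, dist (fun ω => Pjoint p' q (e ω)) (fun ω => g (X₀ ω.1).1) y
          * -∑ z, q k y z * Real.logb 2 (q k y z) :=
        condEnt_snd_of_kernel _ _ (q k) (hq1 k) X₀ (fun x => g x.1) fun a c => by
          rw [Pjoint_sampSplitAt, hg]
    _ = _ := by
        simp only [X₀, hg, ← dist_comp_equiv e (Pjoint p' q) fun ω => ω.1 k]
        rfl

end Pjoint

section Reindex

variable {M' : ℕ} {𝒴 𝒵 : Fin M' → Type*} [∀ i, Fintype (𝒴 i)] [∀ i, Fintype (𝒵 i)]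
  {V : Type*} [Fintype V] {α : Type*} [Fintype α]

lemma condEnt_ZbarV_insert (P : Samp 𝒴 𝒵 V → ℝ) (X : Samp 𝒴 𝒵 V → α) (k : Fin M')
    (S : Finset (Fin M')) :
    condEnt P X (ZbarV (insert k S)) = condEnt P X (fun ω => (ω.2.1 k, ZbarV S ω)) := by
  refine (condEnt_congr_right_of_injective P X (Y := ZbarV (insert k S))
    (f := fun w =>
      (w.1 ⟨k, mem_insert_self k S⟩, fun i : S => w.1 ⟨i, mem_insert_of_mem i.2⟩, w.2))
    ?_ fun ω => rfl).symm
  rintro ⟨w, v⟩ ⟨w', v'⟩ h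
  simp only [Prod.mk.injEq, funext_iff] at h
  obtain ⟨hk, hS, rfl⟩ := h
  refine Prod.ext (funext fun ⟨i, hi⟩ => ?_) rfl
  rcases mem_insert.1 hi with rfl | hi
  exacts [hk, hS ⟨i, hi⟩]

lemma condEnt_ZbarV_univ (P : Samp 𝒴 𝒵 V → ℝ) (X : Samp 𝒴 𝒵 V → α) (I : Finset (Fin M')) :
    condEnt P X (ZbarV univ) = condEnt P X (fun ω => (Zbar I ω, ZbarV Iᶜ ω)) := by
  refine (condEnt_congr_right_of_injective P X (Y := ZbarV univ)
    (f := fun w =>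
      (fun i : I => w.1 ⟨i, mem_univ _⟩, fun i : (Iᶜ : Finset _) => w.1 ⟨i, mem_univ _⟩, w.2))
    ?_ fun ω => rfl).symm
  rintro ⟨w, v⟩ ⟨w', v'⟩ h
  simp only [Prod.mk.injEq, funext_iff] at h
  obtain ⟨hI, hIc, rfl⟩ := h
  refine Prod.ext (funext fun ⟨i, _⟩ => ?_) rfl
  by_cases hi : i ∈ I
  exacts [hI ⟨i, hi⟩, hIc ⟨i, mem_compl.2 hi⟩]

end Reindex

section Chain

variable {M' : ℕ} {𝒴 𝒵 : Fin M' → Type*} [∀ i, Fintype (𝒴 i)] [∀ i, Fintype (𝒵 i)]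
  {V : Type*} [Fintype V] (p' : (∀ i, 𝒴 i) × V → ℝ) (q : ∀ m, 𝒴 m → 𝒵 m → ℝ)

lemma condMI_Y_Z_eq_condEnt_sub_condEnt (hq1 : ∀ m y, ∑ z, q m y z = 1)
    {I S : Finset (Fin M')} {k : Fin M'} (hkI : k ∈ I) (hkS : k ∉ S) :
    condMI (Pjoint p' q) (fun ω => ω.1 k) (fun ω => ω.2.1 k) (ZbarV S)
      = condEnt (Pjoint p' q) (Ybar I) (ZbarV S)
        - condEnt (Pjoint p' q) (Ybar I) (ZbarV (insert k S)) := by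
  have hYk : condEnt (Pjoint p' q) (fun ω => ω.2.1 k) (fun ω => (ω.1 k, ZbarV S ω))
      = condEnt (Pjoint p' q) (fun ω => ω.2.1 k) (fun ω => (Ybar I ω, ZbarV S ω)) :=
    (condEnt_Z_eq_of_determines_Y p' q hq1 k hkS (fun y => y k) id fun _ => rfl).trans
      (condEnt_Z_eq_of_determines_Y p' q hq1 k hkS (fun y (i : I) => y i)
        (fun x => x ⟨k, hkI⟩) fun _ => rfl).symm
  rw [condMI_eq_condEnt_sub_right, hYk, ← condMI_eq_condEnt_sub_right,
    condMI_eq_condEnt_sub_left, condEnt_ZbarV_insert]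

end Chain

section EnumTail

variable {ι : Type*} [DecidableEq ι] {m : ℕ} (e : Fin m → ι)

def enumTail (n : ℕ) : Finset ι := (univ.filter fun k : Fin m => n ≤ (k : ℕ)).image e

lemma enumTail_coe (j : Fin m) : enumTail e j = (univ.filter fun k => j ≤ k).image e :=
  rfl

lemma enumTail_zero : enumTail e 0 = univ.image e := by
  simp [enumTail]

lemma enumTail_length_eq_empty : enumTail e m = ∅ := by
  simp [enumTail, Fin.is_lt]

lemma enumTail_eq_insert (j : Fin m) : enumTail e j = insert (e j) (enumTail e (j + 1)) := by
  ext x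
  simp only [enumTail, mem_insert, mem_image, mem_filter, mem_univ, true_and]
  constructor
  · rintro ⟨k, hk, rfl⟩
    rcases hk.eq_or_lt with h | h
    exacts [.inl (congrArg e (Fin.ext h)).symm, .inr ⟨k, h, rfl⟩]
  · rintro (rfl | ⟨k, hk, rfl⟩)
    exacts [⟨j, le_rfl, rfl⟩, ⟨k, by omega, rfl⟩]

lemma apply_notMem_enumTail_succ (he : Function.Injective e) (j : Fin m) :
    e j ∉ enumTail e (j + 1) := by
  simp [enumTail, he.eq_iff]

lemma compl_enumTail_succ [Fintype ι] (he : Function.Injective e) (j : Fin m) :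
    (enumTail e (j + 1))ᶜ = insert (e j) (enumTail e j)ᶜ := by
  rw [enumTail_eq_insert, compl_insert,
    insert_erase (mem_compl.2 (apply_notMem_enumTail_succ e he j))]

end EnumTail

theorem statement_6_general (M' : ℕ) (𝒴 𝒵 : Fin M' → Type) [∀ i, Fintype (𝒴 i)]
    [∀ i, Fintype (𝒵 i)] (V : Type) [Fintype V]
    (p' : (∀ i, 𝒴 i) × V → ℝ) (q : ∀ m, 𝒴 m → 𝒵 m → ℝ)
    (hq1 : ∀ m y, ∑ z, q m y z = 1)
    (I : Finset (Fin M'))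
    (m : ℕ) (e : Fin m → Fin M') (he : Function.Injective e)
    (himg : Finset.image e Finset.univ = I) :
    condMI (Pjoint p' q) (Ybar I) (Zbar I) (ZbarV Iᶜ)
      = ∑ j : Fin m,
          condMI (Pjoint p' q)
            (fun ω : Samp 𝒴 𝒵 V => ω.1 (e j))
            (fun ω : Samp 𝒴 𝒵 V => ω.2.1 (e j))
            (ZbarV (((Finset.univ.filter fun k : Fin m => j ≤ k).image e)ᶜ)) := by
  set Φ : ℕ → ℝ := fun n => condEnt (Pjoint p' q) (Ybar I) (ZbarV (enumTail e n)ᶜ)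
  have hterm : ∀ j : Fin m, condMI (Pjoint p' q) (fun ω : Samp 𝒴 𝒵 V => ω.1 (e j))
      (fun ω => ω.2.1 (e j)) (ZbarV (((univ.filter fun k : Fin m => j ≤ k).image e)ᶜ))
        = Φ j - Φ (j + 1) := fun j => by
    have hj : e j ∉ (enumTail e j)ᶜ := by simp [enumTail_eq_insert]
    have hI : e j ∈ I := himg ▸ mem_image_of_mem e (mem_univ j)
    rw [← enumTail_coe, condMI_Y_Z_eq_condEnt_sub_condEnt p' q hq1 hI hj,
      ← compl_enumTail_succ e he]
  rw [sum_congr rfl fun j _ => hterm j, Fin.sum_univ_eq_sum_range (fun n => Φ n - Φ (n + 1)),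
    sum_range_sub', condMI_eq_condEnt_sub_left, ← condEnt_ZbarV_univ]
  dsimp only [Φ]
  rw [enumTail_zero, himg, enumTail_length_eq_empty, compl_empty]

/-- Corollary B.4 (cor:mid) of the paper: for nonempty `I = {i(1),…,i(m)}` (any fixed
enumeration `e` of its `m` elements),
`I(Ȳ_I; Z̄_I | Z̄_{Iᶜ}, V) = Σ_{j=1}^{m} I(Y_{i(j)}; Z_{i(j)} | Z̄_{{1,…,M'}\{i(j),…,i(m)}}, V)`. -/
theorem statement_6 (M' : ℕ) (𝒴 𝒵 : Fin M' → Type) [∀ i, Fintype (𝒴 i)]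
    [∀ i, Fintype (𝒵 i)] (V : Type) [Fintype V]
    (p' : (∀ i, 𝒴 i) × V → ℝ) (q : ∀ m, 𝒴 m → 𝒵 m → ℝ)
    (hp'0 : ∀ yv, 0 ≤ p' yv) (hp'1 : ∑ yv, p' yv = 1)
    (hq0 : ∀ m y z, 0 ≤ q m y z) (hq1 : ∀ m y, ∑ z, q m y z = 1)
    (I : Finset (Fin M')) (hI : I.Nonempty)
    (m : ℕ) (e : Fin m → Fin M') (he : Function.Injective e)
    (himg : Finset.image e Finset.univ = I) :
    condMI (Pjoint p' q) (Ybar I) (Zbar I) (ZbarV Iᶜ)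
      = ∑ j : Fin m,
          condMI (Pjoint p' q)
            (fun ω : Samp 𝒴 𝒵 V => ω.1 (e j))
            (fun ω : Samp 𝒴 𝒵 V => ω.2.1 (e j))
            (ZbarV (((Finset.univ.filter fun k : Fin m => j ≤ k).image e)ᶜ)) :=
  statement_6_general M' 𝒴 𝒵 V p' q hq1 I m e he himg
end
end
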